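/- Substituting a_1 = ... = a_n = x into the rotundus yields twice the Chebyshev polynomial of the first kind: R_n(x,...,x) = 2·T_n(x/2), i.e., 2·T_n(y) = R_n(2y,...,2y). -/

import Mathlib

open Matrix

variable {R : Type*} [CommRing R]

/-- The n×n tridiagonal "continuant" matrix with diagonal entries `a 1, ..., a n`
and 1's on the sub- and superdiagonals. -/
def triMat (n : ℕ) (a : ℕ → R) : Matrix (Fin n) (Fin n) R :=
  fun i j =>
    if (i : ℕ) = (j : ℕ) then a (i + 1)
    else if (i : ℕ) + 1 = (j : ℕ) ∨ (j : ℕ) + 1 = (i : ℕ) then 1 else 0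

/-- The continuant `K_n(a_1, ..., a_n)`, as a tridiagonal determinant. -/
def cont (n : ℕ) (a : ℕ → R) : R := (triMat n a).det

/-- The continuant with shifted index: `contE m = K_{m-1}`, so `contE 0 = K_{-1} = 0`. -/
def contE : ℕ → (ℕ → R) → R
  | 0, _ => 0
  | n + 1, a => cont n a

/-- The rotundus `R_n(a_1,...,a_n) = K_n(a_1,...,a_n) - K_{n-2}(a_2,...,a_{n-1})`,
with the conventions `K_{-1} = 0`, `K_0 = 1` (so `R_0 = 1 - (-?) `... for `n ≥ 1` it is
`K_n - K_{n-2}`; `R_0 = 2`). -/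
def rotundus : ℕ → (ℕ → R) → R
  | 0, _ => 2
  | 1, a => a 1
  | n + 2, a => cont (n + 2) a - cont n (fun i => a (i + 1))

/-- The 2×2 matrix `[[x, 1], [-1, 0]]`. -/
def slMat (x : R) : Matrix (Fin 2) (Fin 2) R := !![x, 1; -1, 0]

/-- The product `[[a_1,1],[-1,0]] ⋯ [[a_n,1],[-1,0]]`. -/
def slProd (n : ℕ) (a : ℕ → R) : Matrix (Fin 2) (Fin 2) R :=
  ((List.range n).map (fun i => slMat (a (i + 1)))).prod


/-!
Expanding the tridiagonal determinant along its last row gives the three-term recurrence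
`K_{n+2} = a_{n+2} K_{n+1} - K_n`. With all `a_i = 2X` this is the recurrence of the Chebyshev
polynomials `U_n`, with the same initial values, so `K_n(2X, …, 2X) = U_n`; the rotundus is then
`U_n - U_{n-2} = 2 T_n`.
-/

theorem det_succ_of_last_row_eq_zero {n : ℕ} (A : Matrix (Fin (n + 1)) (Fin (n + 1)) R)
    (h : ∀ j : Fin n, A (Fin.last n) j.castSucc = 0) :
    A.det = A (Fin.last n) (Fin.last n) * (A.submatrix Fin.castSucc Fin.castSucc).det := by
  rw [det_succ_row A (Fin.last n), Fin.sum_univ_castSucc]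
  simp [h, Fin.succAbove_last, ← two_mul, pow_mul]

theorem det_succ_of_last_column_eq_zero {n : ℕ} (A : Matrix (Fin (n + 1)) (Fin (n + 1)) R)
    (h : ∀ i : Fin n, A i.castSucc (Fin.last n) = 0) :
    A.det = A (Fin.last n) (Fin.last n) * (A.submatrix Fin.castSucc Fin.castSucc).det := by
  rw [← det_transpose, det_succ_of_last_row_eq_zero Aᵀ h, ← transpose_submatrix, det_transpose,
    transpose_apply]

theorem triMat_apply_of_add_one_lt {n : ℕ} (a : ℕ → R) {i j : Fin n}
    (h : (i : ℕ) + 1 < j ∨ (j : ℕ) + 1 < i) : triMat n a i j = 0 := by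
  rw [triMat, if_neg (by omega), if_neg (by omega)]

theorem triMat_submatrix_castSucc (n : ℕ) (a : ℕ → R) :
    (triMat (n + 1) a).submatrix Fin.castSucc Fin.castSucc = triMat n a := rfl

theorem cont_zero (a : ℕ → R) : cont 0 a = 1 := det_fin_zero

theorem cont_one (a : ℕ → R) : cont 1 a = a 1 := by
  simp [cont, triMat]

theorem cont_add_two (n : ℕ) (a : ℕ → R) :
    cont (n + 2) a = a (n + 2) * cont (n + 1) a - cont n a := by
  -- deleting the last row and column `n` leaves a matrix whose last column is `(0, …, 0, 1)`
  have hminor : ((triMat (n + 2) a).submatrix Fin.castSucc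
      (Fin.last n).castSucc.succAbove).det = cont n a := by
    rw [det_succ_of_last_column_eq_zero]
    · have hcols : (Fin.last n).castSucc.succAbove ∘ Fin.castSucc = Fin.castSucc ∘ Fin.castSucc :=
        funext fun j => Fin.succAbove_castSucc_of_lt _ _ (Fin.castSucc_lt_last j)
      simp [triMat, cont, hcols]
      rfl
    · intro i
      simp [triMat_apply_of_add_one_lt]
  have hrow (j : Fin n) : triMat (n + 2) a (Fin.last (n + 1)) j.castSucc.castSucc = 0 :=
    triMat_apply_of_add_one_lt a (by simp)
  have hdiag : triMat (n + 2) a (Fin.last (n + 1)) (Fin.last (n + 1)) = a (n + 2) := by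
    simp [triMat]
  have hsub : triMat (n + 2) a (Fin.last (n + 1)) (Fin.last n).castSucc = 1 := by simp [triMat]
  rw [cont, det_succ_row _ (Fin.last _), Fin.sum_univ_castSucc, Fin.sum_univ_castSucc]
  simp only [hrow, hdiag, hsub, mul_zero, zero_mul, Finset.sum_const_zero, zero_add,
    Fin.succAbove_last, triMat_submatrix_castSucc, hminor]
  simp [cont, ← two_mul, pow_mul]
  ring

open Polynomial Chebyshev

theorem cont_const_two_mul_X (n : ℕ) : cont n (fun _ => (2 * X : R[X])) = U R n := by
  induction n using Nat.twoStepInduction with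
  | zero => simp [cont_zero]
  | one => simp [cont_one]
  | more n ih₀ ih₁ =>
    rw [cont_add_two, ih₁, ih₀]
    exact_mod_cast (U_add_two R n).symm

open Polynomial in
theorem rotundus_eq_two_chebyshevT (n : ℕ) :
    rotundus n (fun _ => (2 * X : ℤ[X])) = 2 * Polynomial.Chebyshev.T ℤ n := by
  match n with
  | 0 => simp [rotundus]
  | 1 => simp [rotundus]
  | n + 2 =>
    rw [rotundus, cont_const_two_mul_X, cont_const_two_mul_X]
    exact_mod_cast (two_mul_T_eq_U_sub_U ℤ n).symm
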